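/- Let Ω = Ω_1 × ⋯ × Ω_N be a product of nonempty measurable spaces and fix a horizon of T ≥ 1 rounds. For each agent i ∈ {1,…,N} let V^i : Ω → ℝ be measurable and bounded, and for each round t = 1,…,T let U_t^i, L_t^i : Ω → ℝ be measurable and bounded with the pointwise sandwich L_t^i(π) ≤ V^i(π) ≤ U_t^i(π) for all π ∈ Ω. For each t let P_t be a probability measure on Ω that is a coarse correlated equilibrium for the payoffs (U_t^1,…,U_t^N), i.e. for every agent i and every d ∈ Ω_i, ∫ U_t^i ∘ D^i_d dP_t ≤ ∫ U_t^i dP_t (all deviation maps assumed measurable). Let t^⋆ ∈ {1,…,T} be a minimizer of t ↦ max_{i ∈ {1,…,N}} ∫ (U_t^i − L_t^i) dP_t. Then P_{t^⋆} is an ε-coarse correlated equilibrium of the true game (V^1,…,V^N) with ε = (1/T) ∑_{t=1}^T max_{i} ∫ (U_t^i − L_t^i) dP_t; that is, for every agent i and every d ∈ Ω_i, ∫ V^i ∘ D^i_d dP_{t^⋆} − ∫ V^i dP_{t^⋆} ≤ (1/T) ∑_{t=1}^T max_{i'} ∫ (U_t^{i'} − L_t^{i'}) dP_t. -/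

import Mathlib

open MeasureTheory

/-! In the round `t⋆`, `V ∘ D ≤ U ∘ D` and `L ≤ V` bound the deviation gain of the true game
by the deviation gain of the optimistic game `U`, which is nonpositive since `P t⋆` is a CCE for
`U`, plus the confidence width `∫ (U - L) dP t⋆`. The width of `t⋆`, being minimal over the
rounds, is at most their average. -/

theorem integral_comp_le_add_integral_sub_of_sandwich {α : Type*} [MeasurableSpace α]
    {μ : Measure α} {D : α → α} {V U L : α → ℝ}
    (hVD : Integrable (V ∘ D) μ) (hUD : Integrable (U ∘ D) μ) (hV : Integrable V μ)
    (hU : Integrable U μ) (hL : Integrable L μ) (hLV : ∀ x, L x ≤ V x) (hVU : ∀ x, V x ≤ U x)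
    (hUD_le : ∫ x, U (D x) ∂μ ≤ ∫ x, U x ∂μ) :
    ∫ x, V (D x) ∂μ ≤ ∫ x, V x ∂μ + ∫ x, (U x - L x) ∂μ := by
  have hVD_le : ∫ x, V (D x) ∂μ ≤ ∫ x, U (D x) ∂μ := integral_mono hVD hUD fun x => hVU (D x)
  have hL_le : ∫ x, L x ∂μ ≤ ∫ x, V x ∂μ := integral_mono hL hV hLV
  rw [integral_sub hU hL]
  linarith

theorem le_one_div_card_mul_sum_of_forall_le {ι : Type*} [Fintype ι] {f : ι → ℝ} {t₀ : ι}
    (h : ∀ t, f t₀ ≤ f t) : f t₀ ≤ 1 / Fintype.card ι * ∑ t, f t := by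
  have hcard : (0 : ℝ) < Fintype.card ι := by
    exact_mod_cast Fintype.card_pos_iff.mpr ⟨t₀⟩
  rw [one_div_mul_eq_div, le_div_iff₀ hcard, mul_comm]
  simpa using Finset.card_nsmul_le_sum Finset.univ f (f t₀) fun t _ => h t

section ApproxCCE

variable {ι : Type*} [DecidableEq ι] {Ω : ι → Type*} [∀ j, MeasurableSpace (Ω j)]

def IsApproxCCE (V : ι → (∀ j, Ω j) → ℝ) (P : Measure (∀ j, Ω j)) (ε : ℝ) : Prop :=
  ∀ i (d : Ω i), ∫ π, V i (Function.update π i d) ∂P ≤ ∫ π, V i π ∂P + ε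

theorem IsApproxCCE.mono {V : ι → (∀ j, Ω j) → ℝ} {P : Measure (∀ j, Ω j)} {ε δ : ℝ}
    (h : IsApproxCCE V P ε) (hεδ : ε ≤ δ) : IsApproxCCE V P δ :=
  fun i d => (h i d).trans (add_le_add_right hεδ _)

theorem IsApproxCCE.of_sandwich [Finite ι] {P : Measure (∀ j, Ω j)} [IsFiniteMeasure P]
    {V U L : ι → (∀ j, Ω j) → ℝ} {B : ℝ}
    (hVmeas : ∀ i, Measurable (V i)) (hVbd : ∀ i π, |V i π| ≤ B)
    (hUmeas : ∀ i, Measurable (U i)) (hUbd : ∀ i π, |U i π| ≤ B)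
    (hLmeas : ∀ i, Measurable (L i)) (hLbd : ∀ i π, |L i π| ≤ B)
    (hsand : ∀ i π, L i π ≤ V i π ∧ V i π ≤ U i π)
    (hDmeas : ∀ i (d : Ω i), Measurable fun π : ∀ j, Ω j => Function.update π i d)
    (hU : IsApproxCCE U P 0) :
    IsApproxCCE V P (⨆ i, ∫ π, (U i π - L i π) ∂P) := by
  have integrable {f : (∀ j, Ω j) → ℝ} (hf : Measurable f) (hfB : ∀ π, |f π| ≤ B) :
      Integrable f P :=
    Integrable.of_bound hf.aestronglyMeasurable B (ae_of_all _ hfB)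
  intro i d
  have hgain := integral_comp_le_add_integral_sub_of_sandwich (μ := P)
    (integrable ((hVmeas i).comp (hDmeas i d)) fun π => hVbd i _)
    (integrable ((hUmeas i).comp (hDmeas i d)) fun π => hUbd i _)
    (integrable (hVmeas i) (hVbd i)) (integrable (hUmeas i) (hUbd i))
    (integrable (hLmeas i) (hLbd i)) (fun π => (hsand i π).1) (fun π => (hsand i π).2)
    (by simpa using hU i d)
  have hwidth_le : ∫ π, (U i π - L i π) ∂P ≤ ⨆ i, ∫ π, (U i π - L i π) ∂P :=
    le_ciSup (Finite.bddAbove_range fun i => ∫ π, (U i π - L i π) ∂P) i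
  exact hgain.trans (add_le_add_right hwidth_le _)

end ApproxCCE

theorem offline_eps_CCE_general
    {N T : ℕ}
    (Ω : Fin N → Type*) [∀ j, MeasurableSpace (Ω j)]
    (V : Fin N → (∀ j, Ω j) → ℝ)
    (U L : Fin T → Fin N → (∀ j, Ω j) → ℝ)
    (B : ℝ)
    (hVmeas : ∀ i, Measurable (V i)) (hVbd : ∀ i π, |V i π| ≤ B)
    (hUmeas : ∀ t i, Measurable (U t i)) (hUbd : ∀ t i π, |U t i π| ≤ B)
    (hLmeas : ∀ t i, Measurable (L t i)) (hLbd : ∀ t i π, |L t i π| ≤ B)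
    (hsand : ∀ (t : Fin T) (i : Fin N) (π : ∀ j, Ω j),
      L t i π ≤ V i π ∧ V i π ≤ U t i π)
    (hDmeas : ∀ (i : Fin N) (d : Ω i),
      Measurable (fun π : ∀ j, Ω j => Function.update π i d))
    (P : Fin T → Measure (∀ j, Ω j)) [∀ t, IsProbabilityMeasure (P t)]
    (hCCE : ∀ (t : Fin T) (i : Fin N) (d : Ω i),
      ∫ π, U t i (Function.update π i d) ∂(P t) ≤ ∫ π, U t i π ∂(P t))
    (tstar : Fin T)
    (hmin : ∀ t : Fin T,
      (⨆ i : Fin N, ∫ π, (U tstar i π - L tstar i π) ∂(P tstar))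
        ≤ ⨆ i : Fin N, ∫ π, (U t i π - L t i π) ∂(P t)) :
    ∀ (i : Fin N) (d : Ω i),
      (∫ π, V i (Function.update π i d) ∂(P tstar)) - ∫ π, V i π ∂(P tstar)
        ≤ (1 / (T : ℝ)) *
            ∑ t : Fin T, ⨆ i' : Fin N, ∫ π, (U t i' π - L t i' π) ∂(P t) := by
  have hwidth : IsApproxCCE V (P tstar) (⨆ i, ∫ π, (U tstar i π - L tstar i π) ∂(P tstar)) :=
    .of_sandwich hVmeas hVbd (hUmeas tstar) (hUbd tstar) (hLmeas tstar) (hLbd tstar)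
      (hsand tstar) hDmeas fun i d => by simpa using hCCE tstar i d
  have havg := le_one_div_card_mul_sum_of_forall_le
    (f := fun t => ⨆ i, ∫ π, (U t i π - L t i π) ∂(P t)) hmin
  rw [Fintype.card_fin] at havg
  intro i d
  exact sub_le_iff_le_add'.mpr (hwidth.mono havg i d)

/-- core of Theorem 2 of the paper: offline convergence to an ε-CCE.
If each `P t` is a CCE of the optimistic game `(U t 1, …, U t N)` and the payoffs are
sandwiched `L t i ≤ V i ≤ U t i`, then the round `tstar` minimizing the worst-case
confidence width yields an ε-CCE of the true game `(V 1, …, V N)` with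
`ε = (1/T) ∑_t max_i ∫ (U t i − L t i) dP t`. -/
theorem offline_eps_CCE
    {N T : ℕ} [NeZero N] [NeZero T]
    (Ω : Fin N → Type*) [∀ j, MeasurableSpace (Ω j)] [∀ j, Nonempty (Ω j)]
    (V : Fin N → (∀ j, Ω j) → ℝ)
    (U L : Fin T → Fin N → (∀ j, Ω j) → ℝ)
    (B : ℝ)
    (hVmeas : ∀ i, Measurable (V i)) (hVbd : ∀ i π, |V i π| ≤ B)
    (hUmeas : ∀ t i, Measurable (U t i)) (hUbd : ∀ t i π, |U t i π| ≤ B)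
    (hLmeas : ∀ t i, Measurable (L t i)) (hLbd : ∀ t i π, |L t i π| ≤ B)
    (hsand : ∀ (t : Fin T) (i : Fin N) (π : ∀ j, Ω j),
      L t i π ≤ V i π ∧ V i π ≤ U t i π)
    (hDmeas : ∀ (i : Fin N) (d : Ω i),
      Measurable (fun π : ∀ j, Ω j => Function.update π i d))
    (P : Fin T → Measure (∀ j, Ω j)) [∀ t, IsProbabilityMeasure (P t)]
    (hCCE : ∀ (t : Fin T) (i : Fin N) (d : Ω i),
      ∫ π, U t i (Function.update π i d) ∂(P t) ≤ ∫ π, U t i π ∂(P t))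
    (tstar : Fin T)
    (hmin : ∀ t : Fin T,
      (⨆ i : Fin N, ∫ π, (U tstar i π - L tstar i π) ∂(P tstar))
        ≤ ⨆ i : Fin N, ∫ π, (U t i π - L t i π) ∂(P t)) :
    ∀ (i : Fin N) (d : Ω i),
      (∫ π, V i (Function.update π i d) ∂(P tstar)) - ∫ π, V i π ∂(P tstar)
        ≤ (1 / (T : ℝ)) *
            ∑ t : Fin T, ⨆ i' : Fin N, ∫ π, (U t i' π - L t i' π) ∂(P t) :=
  offline_eps_CCE_general Ω V U L B hVmeas hVbd hUmeas hUbd hLmeas hLbd hsand hDmeas P hCCE tstar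
    hmin
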